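/- Suppose there is a sequence a_n > 0 such that for every λ > 0, a_n·(1 - G_n(λ)) converges to some finite limit ψ(λ). Then there exists a finite measure μ on [0,1] such that ψ(λ) = ∫_{[0,1]} [λ]_x μ(dx) for every λ > 0, and the measures a_n (1-x) p*_n(dx) converge weakly to μ on [0,1]. Moreover, μ is uniquely determined by ψ. -/

import Mathlib

open MeasureTheory Filter

/-- The function `[λ]_x = (1 - x^λ)/(1 - x)` for `x ∈ [0,1)`, with `[λ]_1 = λ`. -/
noncomputable def lamBr (lam x : ℝ) : ℝ := if x = 1 then lam else (1 - x ^ lam) / (1 - x)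

/-!
Write `ν_n` for `a_n (1 - x) p*_n(dx)` on `I = [0,1]`. As `(1 - x) [λ]_x = 1 - x^λ`, we have
`∫ [λ] dν_n = a_n (1 - G_n(λ)) → ψ(λ)`. As `[1] = 1` and `[j+1]_x - [j]_x = x^j`, the span of the
`[λ]`, `λ > 0`, contains the polynomials and is dense in `C(I, ℝ)` by Weierstrass. The positive
functionals `f ↦ ∫ f dν_n` have norms `ν_n(I) = ∫ [1] dν_n`, which are bounded; converging on a set
with dense span, they converge on all of `C(I, ℝ)`, and Riesz–Markov–Kakutani represents the limit
by a finite measure `μ`. The same density shows that `μ` is determined by its integrals of `[λ]`.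
-/

open Set Topology CompactlySupported
open scoped unitInterval

namespace PositiveLinearMap
variable {X : Type*} [TopologicalSpace X] [CompactSpace X]

theorem abs_apply_le (L : C(X, ℝ) →ₚ[ℝ] ℝ) (f : C(X, ℝ)) : |L f| ≤ ‖f‖ * L 1 := by
  have hle : f ≤ ‖f‖ • (1 : C(X, ℝ)) := fun x => by
    simpa using (le_abs_self _).trans (f.norm_coe_le_norm x)
  have hge : -(‖f‖ • (1 : C(X, ℝ))) ≤ f := fun x => by
    simpa using neg_le_of_abs_le (f.norm_coe_le_norm x)
  have h1 : L f ≤ ‖f‖ * L 1 := by simpa using L.monotone' hle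
  have h2 : -(‖f‖ * L 1) ≤ L f := by simpa using L.monotone' hge
  exact abs_le.mpr ⟨h2, h1⟩

theorem dist_apply_le (L : C(X, ℝ) →ₚ[ℝ] ℝ) (f g : C(X, ℝ)) :
    dist (L f) (L g) ≤ L 1 * dist f g := by
  rw [Real.dist_eq, dist_eq_norm, ← map_sub, mul_comm]
  exact abs_apply_le L (f - g)

theorem continuous_of_compactSpace (L : C(X, ℝ) →ₚ[ℝ] ℝ) : Continuous L :=
  AddMonoidHomClass.continuous_of_bound L (L 1) fun f => by
    rw [Real.norm_eq_abs, mul_comm]; exact abs_apply_le L f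

theorem cauchySeq_apply_of_dense {L : ℕ → C(X, ℝ) →ₚ[ℝ] ℝ} {C : ℝ} (hC : ∀ n, L n 1 ≤ C)
    {D : Set C(X, ℝ)} (hD : Dense D) (hconv : ∀ g ∈ D, CauchySeq fun n => L n g)
    (f : C(X, ℝ)) : CauchySeq fun n => L n f := by
  rw [Metric.cauchySeq_iff]
  intro ε hε
  have hC1 : 0 < C + 1 := by linarith [hC 0, map_nonneg (L 0) (zero_le_one' C(X, ℝ))]
  obtain ⟨g, hgD, hfg⟩ := hD.exists_dist_lt f (show 0 < ε / (4 * (C + 1)) by positivity)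
  obtain ⟨N, hN⟩ := Metric.cauchySeq_iff.mp (hconv g hgD) (ε / 2) (by positivity)
  have hclose (n : ℕ) : dist (L n f) (L n g) ≤ ε / 4 := calc
    dist (L n f) (L n g) ≤ L n 1 * dist f g := dist_apply_le _ f g
    _ ≤ (C + 1) * (ε / (4 * (C + 1))) := by
      gcongr
      · linarith [hC n]
    _ = ε / 4 := by field_simp
  refine ⟨N, fun m hm n hn => ?_⟩
  calc dist (L m f) (L n f)
      ≤ dist (L m f) (L m g) + dist (L m g) (L n g) + dist (L n f) (L n g) := by
        rw [dist_comm (L n f)]; exact dist_triangle4 ..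
    _ < ε / 4 + ε / 2 + ε / 4 := by linarith [hclose m, hN m hm n hn, hclose n]
    _ = ε := by ring

end PositiveLinearMap

theorem exists_tendsto_apply_of_mem_span {E F : Type*} [AddCommGroup E] [Module ℝ E]
    [FunLike F E ℝ] [LinearMapClass F ℝ E ℝ] {L : ℕ → F} {G : Set E}
    (hG : ∀ g ∈ G, ∃ l, Tendsto (fun n => L n g) atTop (𝓝 l)) {f : E}
    (hf : f ∈ Submodule.span ℝ G) : ∃ l, Tendsto (fun n => L n f) atTop (𝓝 l) := by
  induction hf using Submodule.span_induction with
  | mem g hg => exact hG g hg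
  | zero => exact ⟨0, by simp⟩
  | add f g _ _ hf hg =>
    obtain ⟨l, hl⟩ := hf
    obtain ⟨l', hl'⟩ := hg
    exact ⟨l + l', by simpa using hl.add hl'⟩
  | smul c f _ hf =>
    obtain ⟨l, hl⟩ := hf
    exact ⟨c * l, by simpa using hl.const_mul c⟩

namespace ContinuousMap
variable {X : Type*} [TopologicalSpace X] [CompactSpace X] [MeasurableSpace X]

noncomputable def integralPositiveLinearMap [OpensMeasurableSpace X] (μ : Measure X)
    [IsFiniteMeasure μ] : C(X, ℝ) →ₚ[ℝ] ℝ :=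
  PositiveLinearMap.mk₀
    { toFun f := ∫ x, f x ∂μ
      map_add' f g := integral_add (f.continuous.integrable_of_hasCompactSupport
        (.of_compactSpace f)) (g.continuous.integrable_of_hasCompactSupport (.of_compactSpace g))
      map_smul' c f := integral_smul c f }
    fun _ hf => integral_nonneg hf

variable [BorelSpace X]

theorem _root_.MeasureTheory.Measure.ext_of_integral_eq_of_dense_span [HasOuterApproxClosed X]
    {μ ν : Measure X} [IsFiniteMeasure μ] [IsFiniteMeasure ν]
    {G : Set C(X, ℝ)} (hG : Dense (Submodule.span ℝ G : Set C(X, ℝ)))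
    (h : ∀ g ∈ G, ∫ x, g x ∂μ = ∫ x, g x ∂ν) : μ = ν := by
  let Iμ := integralPositiveLinearMap μ
  let Iν := integralPositiveLinearMap ν
  have hspan : Submodule.span ℝ G ≤ LinearMap.eqLocus Iμ.toLinearMap Iν.toLinearMap :=
    Submodule.span_le.mpr h
  have hall : ⇑Iμ = ⇑Iν := Iμ.continuous_of_compactSpace.ext_on hG
    Iν.continuous_of_compactSpace fun f hf => hspan hf
  exact ext_of_forall_integral_eq_of_IsFiniteMeasure fun f => congrFun hall f.toContinuousMap

variable [T2Space X]

theorem exists_measure_tendsto_of_dense_span {L : ℕ → C(X, ℝ) →ₚ[ℝ] ℝ} {C : ℝ}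
    (hC : ∀ n, L n 1 ≤ C) {G : Set C(X, ℝ)} (hG : Dense (Submodule.span ℝ G : Set C(X, ℝ)))
    (hconv : ∀ g ∈ G, ∃ l, Tendsto (fun n => L n g) atTop (𝓝 l)) :
    ∃ μ : Measure X, IsFiniteMeasure μ ∧
      ∀ f : C(X, ℝ), Tendsto (fun n => L n f) atTop (𝓝 (∫ x, f x ∂μ)) := by
  have hlim (f : C(X, ℝ)) : Tendsto (fun n => L n f) atTop (𝓝 (limUnder atTop fun n => L n f)) :=
    (PositiveLinearMap.cauchySeq_apply_of_dense hC hG (fun g hg =>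
      (exists_tendsto_apply_of_mem_span hconv hg).choose_spec.cauchySeq) f).tendsto_limUnder
  let Λ : C_c(X, ℝ) →ₚ[ℝ] ℝ := PositiveLinearMap.mk₀
    { toFun f := limUnder atTop fun n => L n f
      map_add' f g := tendsto_nhds_unique (hlim _) <| by
        rw [show ((f + g : C_c(X, ℝ)) : C(X, ℝ)) = f + g from rfl]
        simpa using (hlim f).add (hlim g)
      map_smul' c f := tendsto_nhds_unique (hlim _) <| by
        rw [show ((c • f : C_c(X, ℝ)) : C(X, ℝ)) = c • f from rfl]
        simpa using (hlim f).const_mul c }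
    fun f hf => ge_of_tendsto' (hlim f) fun n => map_nonneg (L n) hf
  refine ⟨RealRMK.rieszMeasure Λ, inferInstance, fun f => ?_⟩
  have := RealRMK.integral_rieszMeasure Λ (CompactlySupportedContinuousMap.continuousMapEquiv f)
  exact this ▸ hlim f

end ContinuousMap

theorem setIntegral_map_subtypeVal {α : Type*} [MeasurableSpace α] {s : Set α}
    (hs : MeasurableSet s) (μ : Measure s) (f : α → ℝ) :
    ∫ x in s, f x ∂(μ.map (↑)) = ∫ x, f x ∂μ := by
  rw [← integral_subtype_comap hs, (MeasurableEmbedding.subtype_coe hs).comap_map]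

theorem map_subtypeVal_apply_compl {α : Type*} [MeasurableSpace α] {s : Set α}
    (hs : MeasurableSet s) (μ : Measure s) : μ.map (↑) sᶜ = 0 := by
  rw [Measure.map_apply measurable_subtype_coe hs.compl]
  simp

theorem map_comap_subtypeVal_of_compl_eq_zero {α : Type*} [MeasurableSpace α] {s : Set α}
    (hs : MeasurableSet s) {μ : Measure α} (h : μ sᶜ = 0) :
    (μ.comap (↑)).map ((↑) : s → α) = μ := by
  rw [map_comap_subtype_coe hs, Measure.restrict_eq_self_of_ae_mem (ae_iff.mpr h)]

theorem lamBr_eq_dslope (lam : ℝ) : lamBr lam = dslope (fun x => x ^ lam) 1 := by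
  ext x
  rcases eq_or_ne x 1 with rfl | hx
  · simp [lamBr]
  · rw [lamBr, if_neg hx, dslope_of_ne _ hx, slope_def_field, Real.one_rpow, ← neg_div_neg_eq]
    ring_nf

theorem continuousOn_lamBr {lam : ℝ} (hlam : 0 ≤ lam) : ContinuousOn (lamBr lam) (Ici 0) := by
  intro x hx
  rw [lamBr_eq_dslope]
  rcases eq_or_ne x 1 with rfl | hx1
  · exact (continuousAt_dslope_same.mpr
      (Real.differentiableAt_rpow_const_of_ne lam one_ne_zero)).continuousWithinAt
  · exact (continuousWithinAt_dslope_of_ne hx1).mpr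
      (Real.continuousAt_rpow_const x lam (Or.inr hlam)).continuousWithinAt

theorem one_sub_mul_lamBr (lam x : ℝ) : (1 - x) * lamBr lam x = 1 - x ^ lam := by
  rcases eq_or_ne x 1 with rfl | hx
  · simp
  · rw [lamBr, if_neg hx, mul_div_cancel₀ _ (sub_ne_zero.mpr hx.symm)]

theorem lamBr_one (x : ℝ) : lamBr 1 x = 1 := by
  rcases eq_or_ne x 1 with rfl | hx
  · simp [lamBr]
  · rw [lamBr, if_neg hx, Real.rpow_one, div_self (sub_ne_zero.mpr hx.symm)]

theorem lamBr_succ_sub (j : ℕ) (x : ℝ) : lamBr (j + 1) x - lamBr j x = x ^ j := by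
  rcases eq_or_ne x 1 with rfl | hx
  · simp [lamBr]
  · have h : (1 : ℝ) - x ≠ 0 := sub_ne_zero.mpr hx.symm
    rw [lamBr, lamBr, if_neg hx, if_neg hx, ← Nat.cast_succ, Real.rpow_natCast,
      Real.rpow_natCast, pow_succ]
    field_simp
    ring

def lamBrFunctions : Set C(I, ℝ) := {g | ∃ lam > 0, ∀ x : I, g x = lamBr lam x}

theorem continuous_lamBr_comp_val {lam : ℝ} (hlam : 0 ≤ lam) :
    Continuous fun x : I => lamBr lam x :=
  ((continuousOn_lamBr hlam).mono fun _ hx => hx.1).domRestrict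

theorem exists_mem_span_lamBrFunctions_eq_pow (j : ℕ) :
    ∃ g ∈ Submodule.span ℝ lamBrFunctions, ∀ x : I, g x = (x : ℝ) ^ j := by
  have hmem {lam : ℝ} (hlam : 0 < lam) :
      ⟨_, continuous_lamBr_comp_val hlam.le⟩ ∈ Submodule.span ℝ lamBrFunctions :=
    Submodule.subset_span ⟨lam, hlam, fun _ => rfl⟩
  rcases j with _ | j
  · exact ⟨_, hmem one_pos, fun x => (lamBr_one x).trans (pow_zero _).symm⟩
  · exact ⟨_, Submodule.sub_mem _ (hmem (lam := (j + 1 : ℕ) + 1) (by positivity))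
      (hmem (lam := (j + 1 : ℕ)) (by positivity)), fun x => lamBr_succ_sub (j + 1) x⟩

theorem polynomialFunctions_subset_span_lamBrFunctions :
    (polynomialFunctions I : Set C(I, ℝ)) ⊆ Submodule.span ℝ lamBrFunctions := by
  rw [polynomialFunctions_coe]
  rintro _ ⟨Q, rfl⟩
  induction Q using Polynomial.induction_on' with
  | add Q R hQ hR => rw [map_add]; exact add_mem hQ hR
  | monomial j c =>
    obtain ⟨g, hg, hgx⟩ := exists_mem_span_lamBrFunctions_eq_pow j
    rw [SetLike.mem_coe]
    convert Submodule.smul_mem _ c hg using 1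
    ext x
    simp [hgx]

theorem dense_span_lamBrFunctions : Dense (Submodule.span ℝ lamBrFunctions : Set C(I, ℝ)) := by
  refine Dense.mono polynomialFunctions_subset_span_lamBrFunctions ?_
  rw [dense_iff_closure_eq, ← Subalgebra.topologicalClosure_coe,
    polynomialFunctions_closure_eq_top']
  rfl

theorem eq_of_setIntegral_lamBr_eq {μ ν : Measure ℝ} [IsFiniteMeasure μ] [IsFiniteMeasure ν]
    (hμ : μ (Icc 0 1)ᶜ = 0) (hν : ν (Icc 0 1)ᶜ = 0)
    (h : ∀ lam > (0 : ℝ), ∫ x in Icc 0 1, lamBr lam x ∂μ = ∫ x in Icc 0 1, lamBr lam x ∂ν) :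
    μ = ν := by
  rw [← map_comap_subtypeVal_of_compl_eq_zero measurableSet_Icc hμ,
    ← map_comap_subtypeVal_of_compl_eq_zero measurableSet_Icc hν]
  congr 1
  refine Measure.ext_of_integral_eq_of_dense_span dense_span_lamBrFunctions
    fun g ⟨lam, hlam, hg⟩ => ?_
  simpa only [hg, integral_subtype_comap measurableSet_Icc (lamBr lam)] using h lam hlam

theorem natCast_div_mem_unitInterval {k n : ℕ} (hk : k ∈ Finset.range (n + 1)) :
    (k : ℝ) / n ∈ I :=
  unitInterval.div_mem k.cast_nonneg n.cast_nonneg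
    (Nat.cast_le.mpr (Finset.mem_range_succ_iff.mp hk))

/-- Integration against `a n (1 - x) p*_n(dx)`; `projIcc` only views `k / n` as a point of `I`. -/
noncomputable def rescaledFunctional (p : ℕ → ℕ → ℝ) (a : ℕ → ℝ) (hp : ∀ n k, 0 ≤ p n k)
    (ha : ∀ n, 0 ≤ a n) (n : ℕ) : C(I, ℝ) →ₚ[ℝ] ℝ :=
  PositiveLinearMap.mk₀
    { toFun g := a n * ∑ k ∈ Finset.range (n + 1),
        p n k * (1 - k / n) * g (projIcc 0 1 zero_le_one (k / n))
      map_add' f g := by simp only [ContinuousMap.add_apply, mul_add, Finset.sum_add_distrib]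
      map_smul' c g := by
        simp only [ContinuousMap.smul_apply, smul_eq_mul, Finset.mul_sum, RingHom.id_apply]
        exact Finset.sum_congr rfl fun _ _ => by ring }
    fun g hg => mul_nonneg (ha n) <| Finset.sum_nonneg fun k hk =>
      mul_nonneg (mul_nonneg (hp n k) (sub_nonneg.mpr (natCast_div_mem_unitInterval hk).2)) (hg _)

section rescaledFunctional

variable {p : ℕ → ℕ → ℝ} {a : ℕ → ℝ} {hp : ∀ n k, 0 ≤ p n k} {ha : ∀ n, 0 ≤ a n}

theorem rescaledFunctional_apply {g : C(I, ℝ)} {f : ℝ → ℝ} (hgf : ∀ x : I, g x = f x) (n : ℕ) :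
    rescaledFunctional p a hp ha n g =
      a n * ∑ k ∈ Finset.range (n + 1), p n k * (1 - k / n) * f (k / n) := by
  refine congrArg (a n * ·) (Finset.sum_congr rfl fun k hk => ?_)
  rw [hgf, projIcc_of_mem _ (natCast_div_mem_unitInterval hk)]

theorem rescaledFunctional_lamBr (hsum : ∀ n, ∑ k ∈ Finset.range (n + 1), p n k = 1)
    {lam : ℝ} {g : C(I, ℝ)} (hg : ∀ x : I, g x = lamBr lam x) (n : ℕ) :
    rescaledFunctional p a hp ha n g =
      a n * (1 - ∑ k ∈ Finset.range (n + 1), ((k : ℝ) / n) ^ lam * p n k) := by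
  have hterm (k : ℕ) : p n k * (1 - k / n) * lamBr lam (k / n) = p n k - (k / n) ^ lam * p n k := by
    rw [mul_assoc, one_sub_mul_lamBr]; ring
  simp only [rescaledFunctional_apply hg, hterm, Finset.sum_sub_distrib, hsum]

end rescaledFunctional

theorem stmt6 (p : ℕ → ℕ → ℝ) (hp : ∀ n k, 0 ≤ p n k)
    (hsum : ∀ n, ∑ k ∈ Finset.range (n+1), p n k = 1)
    (a : ℕ → ℝ) (ha : ∀ n, 0 < a n) (ψ : ℝ → ℝ)
    (hconv : ∀ lam > (0:ℝ),
      Tendsto (fun n => a n * (1 - ∑ k ∈ Finset.range (n+1), ((k:ℝ)/n) ^ lam * p n k))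
        atTop (nhds (ψ lam))) :
    ∃ μ : Measure ℝ, μ Set.univ < ⊤ ∧ μ (Set.Icc (0:ℝ) 1)ᶜ = 0 ∧
      (∀ lam > (0:ℝ), ψ lam = ∫ x in Set.Icc (0:ℝ) 1, lamBr lam x ∂μ) ∧
      (∀ f : ℝ → ℝ, ContinuousOn f (Set.Icc 0 1) →
        Tendsto (fun n => a n * ∑ k ∈ Finset.range (n+1),
            p n k * (1 - (k:ℝ)/n) * f ((k:ℝ)/n))
          atTop (nhds (∫ x in Set.Icc (0:ℝ) 1, f x ∂μ))) ∧
      (∀ μ' : Measure ℝ, μ' Set.univ < ⊤ → μ' (Set.Icc (0:ℝ) 1)ᶜ = 0 →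
        (∀ lam > (0:ℝ), ψ lam = ∫ x in Set.Icc (0:ℝ) 1, lamBr lam x ∂μ') → μ' = μ) := by
  let L := rescaledFunctional p a hp (fun n => (ha n).le)
  have hL {lam : ℝ} (hlam : 0 < lam) {g : C(I, ℝ)} (hg : ∀ x : I, g x = lamBr lam x) :
      Tendsto (fun n => L n g) atTop (𝓝 (ψ lam)) := by
    simpa only [L, rescaledFunctional_lamBr hsum hg] using hconv lam hlam
  obtain ⟨C, hC⟩ := (hL one_pos (g := 1) fun x => (lamBr_one x).symm).bddAbove_range
  obtain ⟨μ₀, _, hμ₀⟩ := ContinuousMap.exists_measure_tendsto_of_dense_span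
    (fun n => hC ⟨n, rfl⟩) dense_span_lamBrFunctions fun g ⟨_, hlam, hg⟩ => ⟨_, hL hlam hg⟩
  have hψ (lam : ℝ) (hlam : 0 < lam) : ψ lam = ∫ x in Icc (0 : ℝ) 1, lamBr lam x ∂μ₀.map (↑) := by
    rw [setIntegral_map_subtypeVal measurableSet_Icc]
    exact tendsto_nhds_unique (hL hlam fun _ => rfl) (hμ₀ ⟨_, continuous_lamBr_comp_val hlam.le⟩)
  refine ⟨μ₀.map (↑), measure_lt_top _ _, map_subtypeVal_apply_compl measurableSet_Icc μ₀, hψ,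
    fun f hf => ?_, fun μ' hfin hsupp hψ' => ?_⟩
  · rw [setIntegral_map_subtypeVal measurableSet_Icc]
    exact (hμ₀ ⟨_, hf.domRestrict⟩).congr (rescaledFunctional_apply fun _ => rfl)
  · have : IsFiniteMeasure μ' := ⟨hfin⟩
    exact eq_of_setIntegral_lamBr_eq hsupp (map_subtypeVal_apply_compl measurableSet_Icc μ₀)
      fun lam hlam => (hψ' lam hlam).symm.trans (hψ lam hlam)
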